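/- Fix T > 0, t₀ ∈ (0,∞), a probability measure μ₀ on ℝ^d with finite first moment and x₀ ∈ ℝ^d. For i = 1, 2 let g_i : [0,T] → ℝ^d be continuous with g_i(0) = 0 and let f_i be the unique continuous solution of f_i(t) = x₀ − ∫₀ᵗ ∇V(f_i(s)) ds − ∫₀ᵗ (t₀/(t₀+s))·∇F*μ₀(f_i(s)) ds − ∫₀ᵗ (1/(t₀+s))·∫₀ˢ ∇F(f_i(s)−f_i(u)) du ds + g_i(t). If sup_{t∈[0,T]} |g₁(t)−g₂(t)| ≤ δ, then sup_{t∈[0,T]} |f₁(t)−f₂(t)| ≤ δ·exp{(L_V + (1 + T/t₀)·L_F)·T}. In particular the solution map g ↦ f is continuous on C([0,T]; ℝ^d). -/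

import Mathlib

/-!
Subtracting the two integral equations gives
`f₁ t - f₂ t = g₁ t - g₂ t - ∫₀ᵗ (b f₁ s - b f₂ s) ds`, where the drift `b = sidDrift` collects
the three integrands. The Lipschitz bounds on `∇V`, `∇F` and hence on `∇F * μ₀` give
`|b f₁ s - b f₂ s| ≤ (L_V + L_F) |f₁ s - f₂ s| + (L_F / t₀) ∫₀ˢ |f₁ - f₂|`: the two `∇F` terms
carry the weights `t₀ / (t₀ + s)` and `s / (t₀ + s)`, which add up to `1`, and the memory integral
is damped by `1 / (t₀ + s) ≤ 1 / t₀`. Integrating, `φ = |f₁ - f₂|` satisfies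
`φ t ≤ K ∫₀ᵗ φ + δ` with `K = L_V + (1 + T / t₀) L_F`, and Grönwall's inequality gives
`φ t ≤ δ exp (K t)`.
-/

open MeasureTheory Set

noncomputable section

abbrev Ed (d : ℕ) : Type := EuclideanSpace ℝ (Fin d)

/-- `f` is a continuous solution on `[0,T]` of the integral equation for the
generalized self-interacting diffusion with forcing path `g`. -/
def IsSIDSolution {d : ℕ} (V F : Ed d → ℝ) (T t₀ : ℝ) (μ₀ : Measure (Ed d))
    (x₀ : Ed d) (g : ℝ → Ed d) (f : ℝ → Ed d) : Prop :=
  ContinuousOn f (Icc 0 T) ∧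
  ∀ t ∈ Icc (0:ℝ) T,
    f t = x₀ - (∫ s in (0:ℝ)..t, gradient V (f s))
      - (∫ s in (0:ℝ)..t, (t₀ / (t₀ + s)) • (∫ u, gradient F (f s - u) ∂μ₀))
      - (∫ s in (0:ℝ)..t, (1 / (t₀ + s)) • (∫ u in (0:ℝ)..s, gradient F (f s - f u)))
      + g t

theorem mul_gronwallBound_zero_add (K δ x : ℝ) :
    K * gronwallBound 0 K δ x + δ = δ * Real.exp (K * x) := by
  rcases eq_or_ne K 0 with rfl | hK
  · simp
  · rw [gronwallBound_of_K_ne_0 hK]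
    field_simp
    ring

theorem le_mul_exp_of_le_mul_integral_add {φ : ℝ → ℝ} {K δ a b : ℝ}
    (hφ : ContinuousOn φ (Icc a b)) (hK : 0 ≤ K)
    (h : ∀ t ∈ Icc a b, φ t ≤ K * (∫ s in a..t, φ s) + δ) :
    ∀ t ∈ Icc a b, φ t ≤ δ * Real.exp (K * (t - a)) := by
  have hΦ' : ∀ r ∈ Icc a b,
      HasDerivWithinAt (fun t => ∫ s in a..t, φ s) (φ r) (Icc a b) r := fun r hr =>
    have : Fact (r ∈ Icc a b) := ⟨hr⟩
    intervalIntegral.integral_hasDerivWithinAt_right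
      (hφ.mono (uIcc_subset_Icc (left_mem_Icc.2 (hr.1.trans hr.2)) hr)).intervalIntegrable
      (hφ.stronglyMeasurableAtFilter_nhdsWithin measurableSet_Icc r) (hφ r hr)
  -- The primitive solves the differential inequality `Φ' ≤ K Φ + δ` with `Φ a = 0`.
  have hΦ : ∀ t ∈ Icc a b, (∫ s in a..t, φ s) ≤ gronwallBound 0 K δ (t - a) :=
    le_gronwallBound_of_liminf_deriv_right_le (fun r hr => (hΦ' r hr).continuousWithinAt)
      (fun r hr _ hlt => ((hΦ' r (Ico_subset_Icc_self hr)).mono_of_mem_nhdsWithin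
        (Icc_mem_nhdsGE_of_mem hr)).liminf_right_slope_le hlt)
      (by simp) (fun r hr => h r (Ico_subset_Icc_self hr))
  intro t ht
  calc φ t ≤ K * (∫ s in a..t, φ s) + δ := h t ht
    _ ≤ K * gronwallBound 0 K δ (t - a) + δ := by gcongr; exact hΦ t ht
    _ = δ * Real.exp (K * (t - a)) := mul_gronwallBound_zero_add K δ (t - a)

section Lipschitz

variable {E G : Type*} [NormedAddCommGroup E] [NormedAddCommGroup G] {φ : E → G} {L : ℝ}

theorem continuous_of_norm_sub_le (hφ : ∀ x y, ‖φ x - φ y‖ ≤ L * ‖x - y‖) : Continuous φ :=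
  (LipschitzWith.of_dist_le' (K := L) fun x y => by
    simpa only [dist_eq_norm] using hφ x y).continuous

theorem norm_intervalIntegral_comp_sub_sub_le [NormedSpace ℝ G]
    (hφ : ∀ x y, ‖φ x - φ y‖ ≤ L * ‖x - y‖) (hL : 0 ≤ L) {f₁ f₂ : ℝ → E} {a b : ℝ} (hab : a ≤ b)
    (hf₁ : ContinuousOn f₁ (Icc a b)) (hf₂ : ContinuousOn f₂ (Icc a b)) (x : ℝ) :
    ‖(∫ u in a..b, φ (f₁ x - f₁ u)) - ∫ u in a..b, φ (f₂ x - f₂ u)‖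
      ≤ L * ((b - a) * ‖f₁ x - f₂ x‖ + ∫ u in a..b, ‖f₁ u - f₂ u‖) := by
  have hφc := continuous_of_norm_sub_le hφ
  have hint : ∀ f : ℝ → E, ContinuousOn f (Icc a b) →
      ContinuousOn (fun u => φ (f x - f u)) (Icc a b) := fun f hf =>
    hφc.comp_continuousOn (continuousOn_const.sub hf)
  have hdist : ContinuousOn (fun u => ‖f₁ u - f₂ u‖) (Icc a b) := (hf₁.sub hf₂).norm
  have hLdist : ContinuousOn (fun u => L * ‖f₁ u - f₂ u‖) (Icc a b) :=
    continuousOn_const.mul hdist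
  have hpt : ∀ u, ‖φ (f₁ x - f₁ u) - φ (f₂ x - f₂ u)‖
      ≤ L * ‖f₁ x - f₂ x‖ + L * ‖f₁ u - f₂ u‖ := fun u =>
    calc ‖φ (f₁ x - f₁ u) - φ (f₂ x - f₂ u)‖
        ≤ L * ‖(f₁ x - f₂ x) - (f₁ u - f₂ u)‖ := by
          simpa only [sub_sub_sub_comm] using hφ (f₁ x - f₁ u) (f₂ x - f₂ u)
      _ ≤ L * (‖f₁ x - f₂ x‖ + ‖f₁ u - f₂ u‖) := by gcongr; exact norm_sub_le _ _
      _ = L * ‖f₁ x - f₂ x‖ + L * ‖f₁ u - f₂ u‖ := mul_add _ _ _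
  rw [← intervalIntegral.integral_sub ((hint f₁ hf₁).intervalIntegrable_of_Icc hab)
    ((hint f₂ hf₂).intervalIntegrable_of_Icc hab)]
  calc _ ≤ ∫ u in a..b, ‖φ (f₁ x - f₁ u) - φ (f₂ x - f₂ u)‖ :=
        intervalIntegral.norm_integral_le_integral_norm hab
    _ ≤ ∫ u in a..b, (L * ‖f₁ x - f₂ x‖ + L * ‖f₁ u - f₂ u‖) :=
        intervalIntegral.integral_mono_on hab
          (((hint f₁ hf₁).sub (hint f₂ hf₂)).norm.intervalIntegrable_of_Icc hab)
          ((continuousOn_const.add hLdist).intervalIntegrable_of_Icc hab)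
          fun u _ => hpt u
    _ = L * ((b - a) * ‖f₁ x - f₂ x‖ + ∫ u in a..b, ‖f₁ u - f₂ u‖) := by
        rw [intervalIntegral.integral_add intervalIntegrable_const
          (hLdist.intervalIntegrable_of_Icc hab),
          intervalIntegral.integral_const, intervalIntegral.integral_const_mul, smul_eq_mul]
        ring

variable [MeasurableSpace E] [BorelSpace E] [SecondCountableTopology E] {μ : Measure E}

theorem integrable_comp_sub_of_norm_sub_le [IsFiniteMeasure μ]
    (hφ : ∀ x y, ‖φ x - φ y‖ ≤ L * ‖x - y‖) (hμ : Integrable (fun u => ‖u‖) μ) (x : E) :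
    Integrable (fun u => φ (x - u)) μ := by
  refine ((integrable_const ‖φ x‖).add (hμ.const_mul L)).mono'
    ((continuous_of_norm_sub_le hφ).comp
      (continuous_const.sub continuous_id)).aestronglyMeasurable
    (Filter.Eventually.of_forall fun u => ?_)
  calc ‖φ (x - u)‖ ≤ ‖φ x‖ + ‖φ (x - u) - φ x‖ := norm_le_insert' _ _
    _ ≤ ‖φ x‖ + L * ‖u‖ := by simpa using hφ (x - u) x

theorem norm_integral_comp_sub_sub_le [NormedSpace ℝ G] [IsProbabilityMeasure μ]
    (hφ : ∀ x y, ‖φ x - φ y‖ ≤ L * ‖x - y‖) (hμ : Integrable (fun u => ‖u‖) μ) (x y : E) :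
    ‖(∫ u, φ (x - u) ∂μ) - ∫ u, φ (y - u) ∂μ‖ ≤ L * ‖x - y‖ := by
  rw [← integral_sub (integrable_comp_sub_of_norm_sub_le hφ hμ x)
    (integrable_comp_sub_of_norm_sub_le hφ hμ y)]
  simpa using norm_integral_le_of_norm_le_const (μ := μ) (Filter.Eventually.of_forall fun u => by
    simpa only [sub_sub_sub_cancel_right] using hφ (x - u) (y - u))

end Lipschitz

theorem continuous_intervalIntegral_comp_sub {E G : Type*} [NormedAddCommGroup E]
    [NormedAddCommGroup G] [NormedSpace ℝ G] {φ : E → G} (hφ : Continuous φ) {f : ℝ → E}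
    (hf : Continuous f) (a : ℝ) :
    Continuous fun s => ∫ u in a..s, φ (f s - f u) :=
  intervalIntegral.continuous_parametric_intervalIntegral_of_continuous
    (f := fun s u => φ (f s - f u))
    (hφ.comp ((hf.comp continuous_fst).sub (hf.comp continuous_snd))) continuous_id

theorem intervalIntegrable_div_add_smul {E : Type*} [NormedAddCommGroup E] [NormedSpace ℝ E]
    {h : ℝ → E} (hh : Continuous h) {t₀ : ℝ} (ht₀ : 0 < t₀) (c : ℝ) {t : ℝ} (ht : 0 ≤ t) :
    IntervalIntegrable (fun s => (c / (t₀ + s)) • h s) volume 0 t :=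
  ((continuousOn_const.div (continuousOn_const.add continuousOn_id) fun _ hs =>
    (add_pos_of_pos_of_nonneg ht₀ hs.1).ne').smul hh.continuousOn).intervalIntegrable_of_Icc ht

section SID

variable {d : ℕ} {V F : Ed d → ℝ} {T t₀ : ℝ} {μ₀ : Measure (Ed d)} {x₀ : Ed d}
  {g f f' : ℝ → Ed d}

theorem IsSIDSolution.congr (h : IsSIDSolution V F T t₀ μ₀ x₀ g f) (hff' : EqOn f f' (Icc 0 T)) :
    IsSIDSolution V F T t₀ μ₀ x₀ g f' := by
  refine ⟨h.1.congr hff'.symm, fun t ht => ?_⟩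
  have hsub : uIcc 0 t ⊆ Icc 0 T := by
    rw [uIcc_of_le ht.1]; exact Icc_subset_Icc_right ht.2
  have hV : (∫ s in (0:ℝ)..t, gradient V (f s)) = ∫ s in (0:ℝ)..t, gradient V (f' s) :=
    intervalIntegral.integral_congr fun s hs => by simp only [hff' (hsub hs)]
  have hconv : (∫ s in (0:ℝ)..t, (t₀ / (t₀ + s)) • (∫ u, gradient F (f s - u) ∂μ₀))
      = ∫ s in (0:ℝ)..t, (t₀ / (t₀ + s)) • (∫ u, gradient F (f' s - u) ∂μ₀) :=
    intervalIntegral.integral_congr fun s hs => by simp only [hff' (hsub hs)]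
  have hmem : (∫ s in (0:ℝ)..t, (1 / (t₀ + s)) • (∫ u in (0:ℝ)..s, gradient F (f s - f u)))
      = ∫ s in (0:ℝ)..t, (1 / (t₀ + s)) • (∫ u in (0:ℝ)..s, gradient F (f' s - f' u)) :=
    intervalIntegral.integral_congr fun s hs => by
      simp only [hff' (hsub hs), intervalIntegral.integral_congr fun u hu =>
        congrArg (fun y => gradient F (f' s - y)) (hff' (hsub (uIcc_subset_uIcc_left hs hu)))]
  rw [← hff' ht, h.2 t ht, hV, hconv, hmem]

theorem IsSIDSolution.exists_continuous (h : IsSIDSolution V F T t₀ μ₀ x₀ g f) (hT : 0 ≤ T) :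
    ∃ f', Continuous f' ∧ EqOn f f' (Icc 0 T) ∧ IsSIDSolution V F T t₀ μ₀ x₀ g f' := by
  have hext : EqOn f (fun r => f (projIcc 0 T hT r)) (Icc 0 T) := fun r hr => by
    simp only [projIcc_of_mem hT hr]
  exact ⟨_, h.1.comp_continuous (continuous_subtype_val.comp continuous_projIcc)
    (fun r => (projIcc 0 T hT r).2), hext, h.congr hext⟩

variable (V F t₀ μ₀) in
def sidDrift (f : ℝ → Ed d) (s : ℝ) : Ed d :=
  gradient V (f s) + (t₀ / (t₀ + s)) • (∫ u, gradient F (f s - u) ∂μ₀)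
    + (1 / (t₀ + s)) • ∫ u in (0:ℝ)..s, gradient F (f s - f u)

section Integrability

variable (hf : Continuous f) (ht₀ : 0 < t₀) (hV : Continuous (gradient V))
  (hF : Continuous (gradient F)) (hG : Continuous fun x => ∫ u, gradient F (x - u) ∂μ₀)
  {t : ℝ} (ht : 0 ≤ t)
include hf ht₀ hV hF hG ht

theorem intervalIntegrable_sidDrift_terms :
    IntervalIntegrable (fun s => gradient V (f s)) volume 0 t ∧
    IntervalIntegrable (fun s => (t₀ / (t₀ + s)) • (∫ u, gradient F (f s - u) ∂μ₀)) volume 0 t ∧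
    IntervalIntegrable (fun s => (1 / (t₀ + s)) • ∫ u in (0:ℝ)..s, gradient F (f s - f u))
      volume 0 t :=
  ⟨(hV.comp hf).intervalIntegrable 0 t, intervalIntegrable_div_add_smul (hG.comp hf) ht₀ t₀ ht,
    intervalIntegrable_div_add_smul (continuous_intervalIntegral_comp_sub hF hf 0) ht₀ 1 ht⟩

theorem intervalIntegrable_sidDrift : IntervalIntegrable (sidDrift V F t₀ μ₀ f) volume 0 t :=
  have ⟨hA, hB, hC⟩ := intervalIntegrable_sidDrift_terms hf ht₀ hV hF hG ht
  (hA.add hB).add hC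

theorem IsSIDSolution.eq_sub_integral_sidDrift (h : IsSIDSolution V F T t₀ μ₀ x₀ g f)
    (htT : t ≤ T) : f t = x₀ - (∫ s in (0:ℝ)..t, sidDrift V F t₀ μ₀ f s) + g t := by
  obtain ⟨hA, hB, hC⟩ := intervalIntegrable_sidDrift_terms hf ht₀ hV hF hG ht
  simp only [sidDrift]
  rw [intervalIntegral.integral_add (hA.add hB) hC, intervalIntegral.integral_add hA hB,
    h.2 t ⟨ht, htT⟩]
  abel

end Integrability

section Estimates

variable {LV LF : ℝ} {g₁ g₂ f₁ f₂ : ℝ → Ed d} [IsProbabilityMeasure μ₀]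
  (hμ₀ : Integrable (fun u => ‖u‖) μ₀)
  (hVlip : ∀ x y : Ed d, ‖gradient V x - gradient V y‖ ≤ LV * ‖x - y‖)
  (hFlip : ∀ x y : Ed d, ‖gradient F x - gradient F y‖ ≤ LF * ‖x - y‖) (hLF : 0 ≤ LF)
  (ht₀ : 0 < t₀) (hf₁ : Continuous f₁) (hf₂ : Continuous f₂)
include hμ₀ hVlip hFlip hLF ht₀ hf₁ hf₂

theorem norm_sidDrift_sub_le {s : ℝ} (hs : 0 ≤ s) :
    ‖sidDrift V F t₀ μ₀ f₁ s - sidDrift V F t₀ μ₀ f₂ s‖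
      ≤ (LV + LF) * ‖f₁ s - f₂ s‖ + LF / t₀ * ∫ u in (0:ℝ)..s, ‖f₁ u - f₂ u‖ := by
  set G : Ed d → Ed d := fun x => ∫ u, gradient F (x - u) ∂μ₀
  set M : (ℝ → Ed d) → Ed d := fun f => ∫ u in (0:ℝ)..s, gradient F (f s - f u)
  set J := ∫ u in (0:ℝ)..s, ‖f₁ u - f₂ u‖
  have hJ : 0 ≤ J := intervalIntegral.integral_nonneg hs fun _ _ => norm_nonneg _
  have hpos : 0 < t₀ + s := add_pos_of_pos_of_nonneg ht₀ hs
  have hM : ‖M f₁ - M f₂‖ ≤ LF * (s * ‖f₁ s - f₂ s‖ + J) := by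
    simpa only [sub_zero] using norm_intervalIntegral_comp_sub_sub_le hFlip hLF hs
      hf₁.continuousOn hf₂.continuousOn s
  calc ‖sidDrift V F t₀ μ₀ f₁ s - sidDrift V F t₀ μ₀ f₂ s‖
      = ‖(gradient V (f₁ s) - gradient V (f₂ s)) + (t₀ / (t₀ + s)) • (G (f₁ s) - G (f₂ s))
          + (1 / (t₀ + s)) • (M f₁ - M f₂)‖ := by
        simp only [sidDrift, smul_sub]
        congr 1
        abel
    _ ≤ ‖gradient V (f₁ s) - gradient V (f₂ s)‖ + t₀ / (t₀ + s) * ‖G (f₁ s) - G (f₂ s)‖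
          + 1 / (t₀ + s) * ‖M f₁ - M f₂‖ := by
        refine (norm_add₃_le ..).trans_eq ?_
        rw [norm_smul, norm_smul, Real.norm_of_nonneg (by positivity),
          Real.norm_of_nonneg (by positivity)]
    _ ≤ LV * ‖f₁ s - f₂ s‖ + t₀ / (t₀ + s) * (LF * ‖f₁ s - f₂ s‖)
          + 1 / (t₀ + s) * (LF * (s * ‖f₁ s - f₂ s‖ + J)) := by
        gcongr
        exacts [hVlip _ _, norm_integral_comp_sub_sub_le hFlip hμ₀ _ _]
    _ = (LV + LF) * ‖f₁ s - f₂ s‖ + LF / (t₀ + s) * J := by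
        field_simp
        ring
    _ ≤ (LV + LF) * ‖f₁ s - f₂ s‖ + LF / t₀ * J := by
        gcongr
        linarith

theorem integral_norm_sidDrift_sub_le {t : ℝ} (ht : 0 ≤ t) :
    ∫ s in (0:ℝ)..t, ‖sidDrift V F t₀ μ₀ f₁ s - sidDrift V F t₀ μ₀ f₂ s‖
      ≤ (LV + (1 + t / t₀) * LF) * ∫ s in (0:ℝ)..t, ‖f₁ s - f₂ s‖ := by
  set φ : ℝ → ℝ := fun s => ‖f₁ s - f₂ s‖
  set I := ∫ s in (0:ℝ)..t, φ s
  have hφ : Continuous φ := (hf₁.sub hf₂).norm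
  have hV := continuous_of_norm_sub_le hVlip
  have hF := continuous_of_norm_sub_le hFlip
  have hG := continuous_of_norm_sub_le (norm_integral_comp_sub_sub_le hFlip hμ₀)
  have hbound : ∀ s ∈ Icc 0 t, ‖sidDrift V F t₀ μ₀ f₁ s - sidDrift V F t₀ μ₀ f₂ s‖
      ≤ (LV + LF) * φ s + LF / t₀ * I := fun s hs =>
    (norm_sidDrift_sub_le hμ₀ hVlip hFlip hLF ht₀ hf₁ hf₂ hs.1).trans <| by
      gcongr
      exact intervalIntegral.integral_mono_interval le_rfl hs.1 hs.2
        (Filter.Eventually.of_forall fun _ => norm_nonneg _) (hφ.intervalIntegrable 0 t)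
  calc _ ≤ ∫ s in (0:ℝ)..t, ((LV + LF) * φ s + LF / t₀ * I) :=
        intervalIntegral.integral_mono_on ht
          ((intervalIntegrable_sidDrift hf₁ ht₀ hV hF hG ht).sub
            (intervalIntegrable_sidDrift hf₂ ht₀ hV hF hG ht)).norm
          ((hφ.intervalIntegrable 0 t).const_mul _ |>.add intervalIntegrable_const) hbound
    _ = (LV + (1 + t / t₀) * LF) * I := by
        rw [intervalIntegral.integral_add ((hφ.intervalIntegrable 0 t).const_mul _)
          intervalIntegrable_const, intervalIntegral.integral_const_mul,
          intervalIntegral.integral_const, smul_eq_mul]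
        ring

theorem IsSIDSolution.norm_sub_le_integral (h₁ : IsSIDSolution V F T t₀ μ₀ x₀ g₁ f₁)
    (h₂ : IsSIDSolution V F T t₀ μ₀ x₀ g₂ f₂) {t : ℝ} (ht : t ∈ Icc 0 T) :
    ‖f₁ t - f₂ t‖
      ≤ (LV + (1 + T / t₀) * LF) * (∫ s in (0:ℝ)..t, ‖f₁ s - f₂ s‖) + ‖g₁ t - g₂ t‖ := by
  have hV := continuous_of_norm_sub_le hVlip
  have hF := continuous_of_norm_sub_le hFlip
  have hG := continuous_of_norm_sub_le (norm_integral_comp_sub_sub_le hFlip hμ₀)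
  have hdiff : f₁ t - f₂ t = (g₁ t - g₂ t)
      - ∫ s in (0:ℝ)..t, (sidDrift V F t₀ μ₀ f₁ s - sidDrift V F t₀ μ₀ f₂ s) := by
    rw [intervalIntegral.integral_sub (intervalIntegrable_sidDrift hf₁ ht₀ hV hF hG ht.1)
      (intervalIntegrable_sidDrift hf₂ ht₀ hV hF hG ht.1),
      h₁.eq_sub_integral_sidDrift hf₁ ht₀ hV hF hG ht.1 ht.2,
      h₂.eq_sub_integral_sidDrift hf₂ ht₀ hV hF hG ht.1 ht.2]
    abel
  have hI : 0 ≤ ∫ s in (0:ℝ)..t, ‖f₁ s - f₂ s‖ :=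
    intervalIntegral.integral_nonneg ht.1 fun _ _ => norm_nonneg _
  calc ‖f₁ t - f₂ t‖
      ≤ ‖g₁ t - g₂ t‖ + ∫ s in (0:ℝ)..t, ‖sidDrift V F t₀ μ₀ f₁ s - sidDrift V F t₀ μ₀ f₂ s‖ := by
        rw [hdiff]
        exact (norm_sub_le _ _).trans
          (add_le_add_right (intervalIntegral.norm_integral_le_integral_norm ht.1) _)
    _ ≤ ‖g₁ t - g₂ t‖ + (LV + (1 + t / t₀) * LF) * ∫ s in (0:ℝ)..t, ‖f₁ s - f₂ s‖ := by
        gcongr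
        exact integral_norm_sidDrift_sub_le hμ₀ hVlip hFlip hLF ht₀ hf₁ hf₂ ht.1
    _ ≤ _ := by
        rw [add_comm]
        gcongr
        exact ht.2

end Estimates

end SID

theorem stmt2_general {d : ℕ}
    (V F : Ed d → ℝ)
    (LV LF : ℝ) (hLV : 0 ≤ LV) (hLF : 0 ≤ LF)
    (hVlip : ∀ x y : Ed d, ‖gradient V x - gradient V y‖ ≤ LV * ‖x - y‖)
    (hFlip : ∀ x y : Ed d, ‖gradient F x - gradient F y‖ ≤ LF * ‖x - y‖)
    (T : ℝ) (t₀ : ℝ) (ht₀ : 0 < t₀)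
    (μ₀ : Measure (Ed d)) (hprob : IsProbabilityMeasure μ₀)
    (hμ₀ : Integrable (fun u => ‖u‖) μ₀)
    (x₀ : Ed d) (g₁ g₂ : ℝ → Ed d)
    (f₁ f₂ : ℝ → Ed d)
    (hf₁ : IsSIDSolution V F T t₀ μ₀ x₀ g₁ f₁)
    (hf₂ : IsSIDSolution V F T t₀ μ₀ x₀ g₂ f₂)
    (δ : ℝ) (hδ : ∀ t ∈ Icc (0:ℝ) T, ‖g₁ t - g₂ t‖ ≤ δ) :
    ∀ t ∈ Icc (0:ℝ) T,
      ‖f₁ t - f₂ t‖ ≤ δ * Real.exp ((LV + (1 + T / t₀) * LF) * T) := by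
  intro t ht
  have hT : 0 ≤ T := ht.1.trans ht.2
  have hδ0 : 0 ≤ δ := (norm_nonneg _).trans (hδ t ht)
  have hK : 0 ≤ LV + (1 + T / t₀) * LF :=
    add_nonneg hLV (mul_nonneg (by linarith [div_nonneg hT ht₀.le]) hLF)
  obtain ⟨f₁', hf₁c, he₁, hf₁'⟩ := hf₁.exists_continuous hT
  obtain ⟨f₂', hf₂c, he₂, hf₂'⟩ := hf₂.exists_continuous hT
  have hgronwall := le_mul_exp_of_le_mul_integral_add (hf₁c.sub hf₂c).norm.continuousOn hK
    (fun s hs => (hf₁'.norm_sub_le_integral hμ₀ hVlip hFlip hLF ht₀ hf₁c hf₂c hf₂' hs).trans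
      (add_le_add_right (hδ s hs) _)) t ht
  rw [he₁ ht, he₂ ht]
  calc ‖f₁' t - f₂' t‖ ≤ δ * Real.exp ((LV + (1 + T / t₀) * LF) * (t - 0)) := hgronwall
    _ ≤ δ * Real.exp ((LV + (1 + T / t₀) * LF) * T) := by
        gcongr
        linarith [ht.2]

/-- continuity (with an explicit Grönwall bound) of the solution map
`g ↦ f` of the self-interacting integral equation. -/
theorem stmt2 {d : ℕ} (hd : 1 ≤ d)
    (V F : Ed d → ℝ) (hV : ContDiff ℝ 2 V) (hF : ContDiff ℝ 2 F)
    (LV LF : ℝ) (hLV : 0 ≤ LV) (hLF : 0 ≤ LF)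
    (hVlip : ∀ x y : Ed d, ‖gradient V x - gradient V y‖ ≤ LV * ‖x - y‖)
    (hFlip : ∀ x y : Ed d, ‖gradient F x - gradient F y‖ ≤ LF * ‖x - y‖)
    (T : ℝ) (hT : 0 < T) (t₀ : ℝ) (ht₀ : 0 < t₀)
    (μ₀ : Measure (Ed d)) (hprob : IsProbabilityMeasure μ₀)
    (hμ₀ : Integrable (fun u => ‖u‖) μ₀)
    (x₀ : Ed d) (g₁ g₂ : ℝ → Ed d)
    (hg₁ : ContinuousOn g₁ (Icc 0 T)) (hg₁0 : g₁ 0 = 0)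
    (hg₂ : ContinuousOn g₂ (Icc 0 T)) (hg₂0 : g₂ 0 = 0)
    (f₁ f₂ : ℝ → Ed d)
    (hf₁ : IsSIDSolution V F T t₀ μ₀ x₀ g₁ f₁)
    (hf₂ : IsSIDSolution V F T t₀ μ₀ x₀ g₂ f₂)
    (δ : ℝ) (hδ : ∀ t ∈ Icc (0:ℝ) T, ‖g₁ t - g₂ t‖ ≤ δ) :
    ∀ t ∈ Icc (0:ℝ) T,
      ‖f₁ t - f₂ t‖ ≤ δ * Real.exp ((LV + (1 + T / t₀) * LF) * T) :=
  stmt2_general V F LV LF hLV hLF hVlip hFlip T t₀ ht₀ μ₀ hprob hμ₀ x₀ g₁ g₂ f₁ f₂ hf₁ hf₂ δ hδ
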